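/- arXiv:1709.02683 — 11 statements merged into one kernel-verified Lean document; each statement's English description precedes it below -/
import Mathlib

section
/- Let H > 1 be a real number and let u₂, u₆, L₂ : (0,∞) → ℝ be functions with u₂ differentiable, satisfying for all η ∈ (0,∞): (i) u₂'(η) + (1/H²)·u₂(η)·(u₂(η) − u₆(η)) = 1; (ii) L₂(η) = u₂(η) − H²·cosh η / sinh η; (iii) (1/H²)·L₂(η)·(L₂(η) − u₆(η)) = 1 − H². Then L₂ is differentiable on (0,∞) and satisfies L₂(η)·L₂'(η) = (H²(H² − 1) − L₂(η)²)·cosh η / sinh η for all η ∈ (0,∞). -/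
open Real Set

/-- Assertion 4.1: the equation triple implies the ODE
`L₂ L₂' = (H²(H²−1) − L₂²) · cosh η / sinh η` on `(0,∞)`. -/
theorem stmt_0
    (H : ℝ) (hH : 1 < H)
    (u₂ u₆ L₂ : ℝ → ℝ)
    (hu₂diff : ∀ η ∈ Ioi (0:ℝ), DifferentiableAt ℝ u₂ η)
    (h1 : ∀ η ∈ Ioi (0:ℝ),
      deriv u₂ η + (1 / H ^ 2) * u₂ η * (u₂ η - u₆ η) = 1)
    (h2 : ∀ η ∈ Ioi (0:ℝ),
      L₂ η = u₂ η - H ^ 2 * Real.cosh η / Real.sinh η)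
    (h3 : ∀ η ∈ Ioi (0:ℝ),
      (1 / H ^ 2) * L₂ η * (L₂ η - u₆ η) = 1 - H ^ 2) :
    (∀ η ∈ Ioi (0:ℝ), DifferentiableAt ℝ L₂ η) ∧
    (∀ η ∈ Ioi (0:ℝ),
      L₂ η * deriv L₂ η
        = (H ^ 2 * (H ^ 2 - 1) - (L₂ η) ^ 2) * Real.cosh η / Real.sinh η) := by
  have hH0 : H ≠ 0 := by positivity
  have key : ∀ η ∈ Ioi (0:ℝ),
      HasDerivAt L₂ (deriv u₂ η + H ^ 2 / (Real.sinh η) ^ 2) η := by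
    intro η hη
    have hs : Real.sinh η ≠ 0 := ne_of_gt (Real.sinh_pos_iff.2 hη)
    have hev : L₂ =ᶠ[nhds η] fun x => u₂ x - H ^ 2 * Real.cosh x / Real.sinh x := by
      filter_upwards [isOpen_Ioi.mem_nhds hη] with x hx using h2 x hx
    have hq : HasDerivAt (fun x => H ^ 2 * Real.cosh x / Real.sinh x)
        ((H ^ 2 * Real.sinh η * Real.sinh η - H ^ 2 * Real.cosh η * Real.cosh η)
          / (Real.sinh η) ^ 2) η := by
      exact ((Real.hasDerivAt_cosh η).const_mul (H ^ 2)).div (Real.hasDerivAt_sinh η) hs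
    have hd := (hu₂diff η hη).hasDerivAt.sub hq
    have hder : deriv u₂ η -
        (H ^ 2 * Real.sinh η * Real.sinh η - H ^ 2 * Real.cosh η * Real.cosh η)
          / (Real.sinh η) ^ 2 = deriv u₂ η + H ^ 2 / (Real.sinh η) ^ 2 := by
      have hC := Real.cosh_sq η
      field_simp
      nlinarith [Real.cosh_sq η]
    rw [hder] at hd
    exact hd.congr_of_eventuallyEq hev
  refine ⟨fun η hη => (key η hη).differentiableAt, fun η hη => ?_⟩
  have hs : Real.sinh η ≠ 0 := ne_of_gt (Real.sinh_pos_iff.2 hη)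
  rw [(key η hη).deriv]
  have hC : (Real.cosh η) ^ 2 = (Real.sinh η) ^ 2 + 1 := by
    have := Real.cosh_sq η; linarith
  have e1 := h1 η hη
  have e2 := h2 η hη
  have e3 := h3 η hη
  rw [e2] at e3 ⊢
  linear_combination (norm := (field_simp; ring))
    (u₂ η - H ^ 2 * Real.cosh η / Real.sinh η) * e1 - u₂ η * e3
    - (H ^ 2 * (u₂ η - H ^ 2 * Real.cosh η / Real.sinh η) / (Real.sinh η) ^ 2) * hC
end

section
/- Let H > 0, P ≠ 0 and C₇ ≠ 0 be real numbers, and let η ∈ (0,∞). Suppose the real numbers L₂, u₂ and x satisfy: (i) (L₂/H)² = H² − 1 − (H²/(P sinh²η))·(1 − P); (ii) u₂ = L₂ + H²·cosh η/sinh η; (iii) (1/H²)·(u₂ − 2H²·cosh η/sinh η)·(1/H²)·u₂·sinh²η + C₇·(−x + 1) = 0. Then x = 1 − sinh²η/(C₇H²) − 1/(C₇P). -/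
/-!
Since `u₂ = L₂ + H² coth η`, the product `(u₂ - 2H² coth η) u₂` is the difference of squares
`L₂² - H⁴ coth² η`. Inserting `L₂²` from (4.3) and `cosh² η = sinh² η + 1`, the first term of
(4.16) collapses to `-sinh² η / H² - 1 / P`, and (4.16) becomes linear in `x`.
-/

open Real Set

/-- The first term of (4.16), for any pair `s, c` with `c² = s² + 1` in the role of
`sinh η, cosh η`. -/
lemma structural_term_eq {H P L s c : ℝ} (hH : H ≠ 0) (hP : P ≠ 0) (hs : s ≠ 0)
    (hcs : c ^ 2 = s ^ 2 + 1)
    (hL : (L / H) ^ 2 = H ^ 2 - 1 - (H ^ 2 / (P * s ^ 2)) * (1 - P)) :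
    (1 / H ^ 2) * (L + H ^ 2 * c / s - 2 * H ^ 2 * c / s)
        * ((1 / H ^ 2) * (L + H ^ 2 * c / s) * s ^ 2)
      = -(s ^ 2 / H ^ 2) - 1 / P := by
  have hdiff : (L + H ^ 2 * c / s - 2 * H ^ 2 * c / s) * (L + H ^ 2 * c / s)
      = L ^ 2 - H ^ 4 * c ^ 2 / s ^ 2 := by
    field_simp
    ring
  have hL' : L ^ 2 = H ^ 2 * (H ^ 2 - 1 - (H ^ 2 / (P * s ^ 2)) * (1 - P)) := by
    rw [← hL]
    field_simp
  calc (1 / H ^ 2) * (L + H ^ 2 * c / s - 2 * H ^ 2 * c / s)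
        * ((1 / H ^ 2) * (L + H ^ 2 * c / s) * s ^ 2)
      = (L + H ^ 2 * c / s - 2 * H ^ 2 * c / s) * (L + H ^ 2 * c / s) * s ^ 2 / H ^ 4 := by
        field_simp
    _ = -(s ^ 2 / H ^ 2) - 1 / P := by
        rw [hdiff, hL', hcs]
        field_simp
        ring

/-- Derivation of Formula (4.17) from equation (4.16). -/
theorem stmt_3
    (H P C₇ : ℝ) (hH : 0 < H) (hP : P ≠ 0) (hC₇ : C₇ ≠ 0)
    (η : ℝ) (hη : η ∈ Ioi (0:ℝ))
    (L₂ u₂ x : ℝ)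
    (h1 : (L₂ / H) ^ 2
        = H ^ 2 - 1 - (H ^ 2 / (P * (Real.sinh η) ^ 2)) * (1 - P))
    (h2 : u₂ = L₂ + H ^ 2 * Real.cosh η / Real.sinh η)
    (h3 : (1 / H ^ 2) * (u₂ - 2 * H ^ 2 * Real.cosh η / Real.sinh η)
        * ((1 / H ^ 2) * u₂ * (Real.sinh η) ^ 2) + C₇ * (-x + 1) = 0) :
    x = 1 - (Real.sinh η) ^ 2 / (C₇ * H ^ 2) - 1 / (C₇ * P) := by
  have hs : sinh η ≠ 0 := sinh_ne_zero.2 (ne_of_gt hη)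
  have hcs : cosh η ^ 2 = sinh η ^ 2 + 1 := by linarith [cosh_sq η]
  rw [h2, structural_term_eq hH.ne' hP hs hcs h1] at h3
  have hx : C₇ * (1 - x) = sinh η ^ 2 / H ^ 2 + 1 / P := by linarith
  field_simp at hx ⊢
  linear_combination -hx
end

section
/- Let H > 1 and P > 1 be real numbers and Č₂ > 0. For real parameters H and P, define L̂(η) = 1 − 1/P + (1 − 1/H²)·sinh²η and R₁(η) = cosh η + √(L̂(η)). Let Y₁ : (0,∞) → (0,∞) be differentiable and set r(η) = Č₂·sinh η·Y₁(η)/R₁(η). Then r satisfies r'(η) = r(η)/(P·R₁(η)·sinh η) for all η ∈ (0,∞) if and only if Y₁ satisfies (log Y₁)'(η) = (1/P − 1)/(sinh η·√(L̂(η))) for all η ∈ (0,∞). -/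
open Real Set

/-! Since `r > 0`, the ODE for `r` says `(log r)' = 1 / (P R₁ sinh η)`, and
`(log r)' = coth η + (log Y₁)' - R₁' / R₁`. With `c = cosh η`, `s = sinh η`, `q = √L̂`, the
relations `c² = 1 + s²` and `q² = L̂` turn `1 / (P R₁ s) - c / s + R₁' / R₁` into
`(1 / P - 1) / (s q)`. -/

theorem deriv_eq_mul_iff_deriv_log_eq {f : ℝ → ℝ} {x g : ℝ} (hf : DifferentiableAt ℝ f x)
    (hx : f x ≠ 0) : deriv f x = f x * g ↔ deriv (fun y => log (f y)) x = g := by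
  rw [(hf.hasDerivAt.log hx).deriv, div_eq_iff hx, mul_comm]

theorem hasDerivAt_log_const_mul_mul_div {C u' v' w' x : ℝ} {u v w : ℝ → ℝ}
    (hu : HasDerivAt u u' x) (hv : HasDerivAt v v' x) (hw : HasDerivAt w w' x)
    (hC : C ≠ 0) (hux : u x ≠ 0) (hvx : v x ≠ 0) (hwx : w x ≠ 0) :
    HasDerivAt (fun y => log (C * u y * v y / w y)) (u' / u x + v' / v x - w' / w x) x := by
  convert (((hu.const_mul C).fun_mul hv).fun_div hw hwx).log (by simp [*]) using 1
  field_simp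

theorem hasDerivAt_sqrt_add_mul_sinh_sq {a A x : ℝ} (h : a + A * sinh x ^ 2 ≠ 0) :
    HasDerivAt (fun y => √(a + A * sinh y ^ 2))
      (A * sinh x * cosh x / √(a + A * sinh x ^ 2)) x := by
  convert ((((hasDerivAt_sinh x).fun_pow 2).const_mul A).const_add a).sqrt h using 1
  push_cast
  ring

theorem one_div_sub_div_add_div_eq {P A s c q : ℝ} (hP : P ≠ 0) (hs : s ≠ 0) (hq : q ≠ 0)
    (hcq : c + q ≠ 0) (hc : c ^ 2 = 1 + s ^ 2) (hq2 : q ^ 2 = 1 - 1 / P + A * s ^ 2) :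
    1 / (P * (c + q) * s) - c / s + (s + A * s * c / q) / (c + q) = (1 / P - 1) / (s * q) := by
  field_simp
  field_simp at hq2
  linear_combination (-(P*q)) * hc - c * hq2

/-- Derivation of (5.14) from (5.7): with `r = Č₂·sinh η·Y₁/R₁`, the ODE
`r' = r/(P·R₁·sinh η)` holds iff `(log Y₁)' = (1/P − 1)/(sinh η·√L̂)`. -/
theorem stmt_8
    (H P C₂ : ℝ) (hH : 1 < H) (hP : 1 < P) (hC₂ : 0 < C₂)
    (Lhat R₁ : ℝ → ℝ)
    (hLhat : ∀ η : ℝ, Lhat η = 1 - 1 / P + (1 - 1 / H ^ 2) * (Real.sinh η) ^ 2)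
    (hR₁ : ∀ η : ℝ, R₁ η = Real.cosh η + Real.sqrt (Lhat η))
    (Y₁ : ℝ → ℝ)
    (hY₁pos : ∀ η ∈ Ioi (0:ℝ), 0 < Y₁ η)
    (hY₁diff : ∀ η ∈ Ioi (0:ℝ), DifferentiableAt ℝ Y₁ η)
    (r : ℝ → ℝ)
    (hr : ∀ η : ℝ, r η = C₂ * Real.sinh η * Y₁ η / R₁ η) :
    (∀ η ∈ Ioi (0:ℝ),
        deriv r η = r η / (P * R₁ η * Real.sinh η))
      ↔
    (∀ η ∈ Ioi (0:ℝ),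
        deriv (fun x => Real.log (Y₁ x)) η
          = (1 / P - 1) / (Real.sinh η * Real.sqrt (Lhat η))) := by
  have hA : 0 ≤ 1 - 1 / H ^ 2 := sub_nonneg.2 <| (div_le_one (by positivity)).2 <| one_le_pow₀ hH.le
  have hP' : 0 < 1 - 1 / P := sub_pos.2 <| (div_lt_one (by linarith)).2 hP
  obtain rfl : r = _ := funext hr
  beta_reduce
  refine forall₂_congr fun η hη => ?_
  have hs : 0 < sinh η := sinh_pos_iff.2 hη
  have hL : 0 < Lhat η := by rw [hLhat]; positivity
  have hR : 0 < R₁ η := by rw [hR₁]; positivity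
  have hY : 0 < Y₁ η := hY₁pos η hη
  have hYd := (hY₁diff η hη).hasDerivAt
  have hRd : HasDerivAt R₁ (sinh η + (1 - 1 / H ^ 2) * sinh η * cosh η / √(Lhat η)) η := by
    rw [funext hR₁, funext hLhat]
    exact (hasDerivAt_cosh η).add (hasDerivAt_sqrt_add_mul_sinh_sq (hLhat η ▸ hL.ne'))
  have hrd := (((hasDerivAt_sinh η).const_mul C₂).fun_mul hYd).fun_div hRd hR.ne'
  have hlogr := hasDerivAt_log_const_mul_mul_div (hasDerivAt_sinh η) hYd hRd hC₂.ne' hs.ne'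
    hY.ne' hR.ne'
  rw [div_eq_mul_one_div, deriv_eq_mul_iff_deriv_log_eq hrd.differentiableAt (by positivity),
    hlogr.deriv, (hYd.log hY.ne').deriv, hR₁ η,
    ← one_div_sub_div_add_div_eq (by positivity) hs.ne' (sqrt_pos.2 hL).ne' (hR₁ η ▸ hR.ne')
      (by rw [cosh_sq]; ring) (by rw [sq_sqrt hL.le, hLhat])]
  constructor <;> intro h <;> linarith
end

section
/- Let H and P be real numbers with 1 < H² < P, and set N = (1 − 1/H²)/(1/H² − 1/P) > 0 and L̂(η) = 1 − 1/P + (1 − 1/H²)·sinh²η. Define, for η ∈ (0,∞) with x = cosh η, Y₁(η) = [((1 − Nx + √(N+1)·√(1+Nx²))·(x − 1)) / ((1 + Nx + √(N+1)·√(1+Nx²))·(x + 1))]^{−(1/2)√(1 − 1/P)}. Then Y₁ is positive and differentiable on (0,∞) and satisfies (log Y₁)'(η) = (1/P − 1)/(sinh η·√(L̂(η))) for all η ∈ (0,∞). -/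
/-!
Write `s = √(N + 1)`, `t = √(1 + N x²)` and `A = 1 - N x + s t`, `B = 1 + N x + s t` for the two
factors of the base `A (x - 1) / (B (x + 1))` of `Y₁`. Then `A B = (s + t)²` and
`t² - s² = N (x² - 1)`, and these two identities collapse the logarithmic derivative of the base
to `2 s / ((x² - 1) t)`; under `x = cosh η` it becomes `2 s / (sinh η · t)`. With
`b = 1/H² - 1/P` one has `1 - 1/P = b (N + 1)` and `L̂ = b (1 + N cosh² η)`, so multiplying by the
exponent `-(1/2) √(1 - 1/P) = -(1/2) √b s` gives `(1/P - 1) / (sinh η √L̂)`.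
-/

open Real Set Filter Topology

noncomputable def y₁Base (N x : ℝ) : ℝ :=
  ((1 - N * x + √(N + 1) * √(1 + N * x ^ 2)) * (x - 1)) /
    ((1 + N * x + √(N + 1) * √(1 + N * x ^ 2)) * (x + 1))

variable {N x : ℝ}

/-- `(N + 1) (1 + N x²) = (1 + N x)² + N (x - 1)²`, so the root dominates `|1 + N x|`. -/
lemma one_add_mul_add_sqrt_mul_sqrt_pos (hN : 0 ≤ N) (x : ℝ) :
    0 < 1 + N * x + √(N + 1) * √(1 + N * x ^ 2) := by
  rw [← sqrt_mul (by linarith)]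
  by_cases h : 0 < 1 + N * x
  · positivity
  · have hgap : 0 < N * (x - 1) ^ 2 := by nlinarith [mul_nonneg hN (sq_nonneg x)]
    have : -(1 + N * x) < √((N + 1) * (1 + N * x ^ 2)) := by
      rw [lt_sqrt (by linarith)]
      nlinarith
    linarith

lemma y₁Base_pos (hN : 0 ≤ N) (hx : 1 < x) : 0 < y₁Base N x := by
  have hA := one_add_mul_add_sqrt_mul_sqrt_pos hN (-x)
  have hB := one_add_mul_add_sqrt_mul_sqrt_pos hN x
  simp only [mul_neg, neg_sq, ← sub_eq_add_neg] at hA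
  unfold y₁Base
  apply div_pos <;> apply mul_pos <;> linarith

lemma hasDerivAt_sqrt_one_add_mul_sq (hN : 0 ≤ N) (x : ℝ) :
    HasDerivAt (fun x => √(1 + N * x ^ 2)) (N * x / √(1 + N * x ^ 2)) x := by
  convert (((hasDerivAt_pow 2 x).const_mul N).const_add 1).sqrt (by positivity) using 1
  ring

/-- The quotient-rule numerator of `y₁Base N x`, for `s = √(N + 1)` and `t = √(1 + N x²)`. -/
lemma y₁Base_wronskian {s t : ℝ} (hs : s ^ 2 = N + 1) (ht : t ^ 2 = 1 + N * x ^ 2)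
    (ht0 : t ≠ 0) :
    ((-N + s * (N * x / t)) * (x - 1) + (1 - N * x + s * t)) * ((1 + N * x + s * t) * (x + 1)) -
      (1 - N * x + s * t) * (x - 1) * ((N + s * (N * x / t)) * (x + 1) + (1 + N * x + s * t)) =
    2 * s * ((1 - N * x + s * t) * (1 + N * x + s * t)) / t := by
  set A := 1 - N * x + s * t
  set B := 1 + N * x + s * t
  have hAB : A * B = (s + t) ^ 2 := by linear_combination (t ^ 2 - 1) * hs + N * ht
  have hW : (-N + s * (N * x / t)) * B - A * (N + s * (N * x / t)) = -2 * N * (s + t) / t := by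
    field_simp
    linear_combination (-2 * N * s) * ht
  rw [show ((-N + s * (N * x / t)) * (x - 1) + A) * (B * (x + 1)) -
      A * (x - 1) * ((N + s * (N * x / t)) * (x + 1) + B) =
      (x ^ 2 - 1) * ((-N + s * (N * x / t)) * B - A * (N + s * (N * x / t))) + 2 * (A * B) by ring,
    hW, hAB]
  field_simp
  linear_combination (s + t) * (ht - hs)

lemma hasDerivAt_y₁Base (hN : 0 ≤ N) (hx : x ^ 2 ≠ 1) :
    HasDerivAt (y₁Base N)
      (y₁Base N x * (2 * √(N + 1) / ((x ^ 2 - 1) * √(1 + N * x ^ 2)))) x := by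
  have hB0 := one_add_mul_add_sqrt_mul_sqrt_pos hN x
  have hA0 := one_add_mul_add_sqrt_mul_sqrt_pos hN (-x)
  simp only [mul_neg, neg_sq, ← sub_eq_add_neg] at hA0
  have hx1 : x + 1 ≠ 0 := fun h => hx (by nlinarith)
  have ht := hasDerivAt_sqrt_one_add_mul_sq hN x
  have hs2 : √(N + 1) ^ 2 = N + 1 := sq_sqrt (by linarith)
  have ht2 : √(1 + N * x ^ 2) ^ 2 = 1 + N * x ^ 2 := sq_sqrt (by positivity)
  have ht0 : 0 < √(1 + N * x ^ 2) := sqrt_pos.2 (by positivity)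
  set s := √(N + 1)
  set t := √(1 + N * x ^ 2)
  have hA : HasDerivAt (fun y => 1 - N * y + s * √(1 + N * y ^ 2)) (-N + s * (N * x / t)) x :=
    ((((hasDerivAt_id' x).const_mul N).const_sub 1).add (ht.const_mul s)).congr_deriv (by ring)
  have hB : HasDerivAt (fun y => 1 + N * y + s * √(1 + N * y ^ 2)) (N + s * (N * x / t)) x :=
    ((((hasDerivAt_id' x).const_mul N).const_add 1).add (ht.const_mul s)).congr_deriv (by ring)
  have hU : HasDerivAt (fun y => (1 - N * y + s * √(1 + N * y ^ 2)) * (y - 1))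
      ((-N + s * (N * x / t)) * (x - 1) + (1 - N * x + s * t)) x :=
    (hA.mul ((hasDerivAt_id' x).sub_const 1)).congr_deriv (by ring)
  have hV : HasDerivAt (fun y => (1 + N * y + s * √(1 + N * y ^ 2)) * (y + 1))
      ((N + s * (N * x / t)) * (x + 1) + (1 + N * x + s * t)) x :=
    (hB.mul ((hasDerivAt_id' x).add_const 1)).congr_deriv (by ring)
  refine (hU.div hV (mul_ne_zero hB0.ne' hx1)).congr_deriv ?_
  change _ / ((1 + N * x + s * t) * (x + 1)) ^ 2 =
    (1 - N * x + s * t) * (x - 1) / ((1 + N * x + s * t) * (x + 1)) * _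
  rw [y₁Base_wronskian hs2 ht2 ht0.ne']
  field_simp
  ring

variable {η : ℝ}

lemma hasDerivAt_y₁Base_cosh (hN : 0 ≤ N) (hη : η ≠ 0) :
    HasDerivAt (fun η => y₁Base N (cosh η))
      (y₁Base N (cosh η) * (2 * √(N + 1) / (sinh η * √(1 + N * cosh η ^ 2)))) η := by
  have hsh : sinh η ≠ 0 := sinh_ne_zero.2 hη
  have hc : cosh η ^ 2 - 1 = sinh η ^ 2 := by rw [cosh_sq]; ring
  refine ((hasDerivAt_y₁Base hN (by rw [← sub_ne_zero, hc]; positivity)).comp η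
    (hasDerivAt_cosh η)).congr_deriv ?_
  rw [hc]
  field_simp

lemma hasDerivAt_log_rpow_y₁Base_cosh (hN : 0 ≤ N) (hη : 0 < η) (c : ℝ) :
    HasDerivAt (fun η => log (y₁Base N (cosh η) ^ c))
      (c * (2 * √(N + 1) / (sinh η * √(1 + N * cosh η ^ 2)))) η := by
  have hpos : ∀ η > 0, 0 < y₁Base N (cosh η) :=
    fun η hη => y₁Base_pos hN (one_lt_cosh.2 hη.ne')
  have hlog : (fun η => log (y₁Base N (cosh η) ^ c)) =ᶠ[𝓝 η]
      fun η => c * log (y₁Base N (cosh η)) :=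
    eventually_of_mem (Ioi_mem_nhds hη) fun η hη => log_rpow (hpos η hη) c
  refine ((((hasDerivAt_y₁Base_cosh hN hη.ne').log (hpos η hη).ne').const_mul c).congr_deriv
    ?_).congr_of_eventuallyEq hlog
  field_simp [(hpos η hη).ne']

/-- The attentive integration producing Formula (5.15): the explicit
function `Y₁` solves `(log Y₁)' = (1/P − 1)/(sinh η √L̂)` on `(0,∞)`. -/
theorem stmt_9
    (H P : ℝ) (hH : 1 < H ^ 2) (hHP : H ^ 2 < P)
    (N : ℝ) (hN : N = (1 - 1 / H ^ 2) / (1 / H ^ 2 - 1 / P))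
    (Lhat : ℝ → ℝ)
    (hLhat : ∀ η : ℝ, Lhat η = 1 - 1 / P + (1 - 1 / H ^ 2) * (Real.sinh η) ^ 2)
    (Y₁ : ℝ → ℝ)
    (hY₁ : ∀ η ∈ Ioi (0:ℝ),
      Y₁ η =
        (((1 - N * Real.cosh η
            + Real.sqrt (N + 1) * Real.sqrt (1 + N * (Real.cosh η) ^ 2))
              * (Real.cosh η - 1))
          / ((1 + N * Real.cosh η
            + Real.sqrt (N + 1) * Real.sqrt (1 + N * (Real.cosh η) ^ 2))
              * (Real.cosh η + 1)))
        ^ (-(1 / 2) * Real.sqrt (1 - 1 / P))) :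
    0 < N ∧
    (∀ η ∈ Ioi (0:ℝ), 0 < Y₁ η) ∧
    (∀ η ∈ Ioi (0:ℝ), DifferentiableAt ℝ Y₁ η) ∧
    (∀ η ∈ Ioi (0:ℝ),
      deriv (fun x => Real.log (Y₁ x)) η
        = (1 / P - 1) / (Real.sinh η * Real.sqrt (Lhat η))) := by
  have hH0 : 0 < H ^ 2 := by linarith
  have ha : 0 < 1 - 1 / H ^ 2 := by rw [sub_pos, div_lt_one hH0]; exact hH
  have hb : 0 < 1 / H ^ 2 - 1 / P := sub_pos.2 (one_div_lt_one_div_of_lt hH0 hHP)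
  have hN0 : 0 < N := hN ▸ div_pos ha hb
  set b := 1 / H ^ 2 - 1 / P
  have hNb : N * b = 1 - 1 / H ^ 2 := by rw [hN, div_mul_cancel₀ _ hb.ne']
  have hP : √(1 - 1 / P) = √b * √(N + 1) := by
    rw [← sqrt_mul hb.le]; congr 1; linear_combination -hNb
  have hL : ∀ η, √(Lhat η) = √b * √(1 + N * cosh η ^ 2) := fun η => by
    rw [← sqrt_mul hb.le, hLhat]
    congr 1
    linear_combination (-cosh η ^ 2) * hNb - (1 - 1 / H ^ 2) * cosh_sq η
  have hY : ∀ η ∈ Ioi (0 : ℝ),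
      Y₁ =ᶠ[𝓝 η] fun η => y₁Base N (cosh η) ^ (-(1 / 2) * √(1 - 1 / P)) :=
    fun η hη => eventually_of_mem (Ioi_mem_nhds hη) hY₁
  have hpos : ∀ η ∈ Ioi (0 : ℝ), 0 < y₁Base N (cosh η) :=
    fun η hη => y₁Base_pos hN0.le (one_lt_cosh.2 (ne_of_gt hη))
  refine ⟨hN0, fun η hη => ?_, fun η hη => ?_, fun η hη => ?_⟩
  · rw [hY₁ η hη]; exact rpow_pos_of_pos (hpos η hη) _
  · exact ((hasDerivAt_y₁Base_cosh hN0.le (ne_of_gt hη)).rpow_const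
      (Or.inl (hpos η hη).ne')).differentiableAt.congr_of_eventuallyEq (hY η hη)
  · refine ((hasDerivAt_log_rpow_y₁Base_cosh hN0.le hη _).congr_of_eventuallyEq
      ((hY η hη).fun_comp log)).deriv.trans ?_
    rw [hL, hP]
    have hs2 : √(N + 1) ^ 2 = N + 1 := sq_sqrt (by linarith)
    have hb2 : √b ^ 2 = b := sq_sqrt hb.le
    have : sinh η ≠ 0 := (sinh_pos_iff.2 hη).ne'
    have : 0 < √(1 + N * cosh η ^ 2) := sqrt_pos.2 (by positivity)
    have : 0 < √b := sqrt_pos.2 hb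
    field_simp
    linear_combination -hNb - √(N + 1) ^ 2 * hb2 - b * hs2
end

section
/- Let T, Ĉ be real numbers with T > 1, 0 < Ĉ < 1 and TĈ < 1, and C₁₇ > 0. For real parameters T and Ĉ, define L₉(θ) = TĈ − Ĉ + (1 − TĈ)·cos²θ and R₂(θ) = cos θ + √(L₉(θ)). Let Y₂ : (0, π/2) → (0,∞) be differentiable and set f(θ) = C₁₇·sin θ·Y₂(θ)/R₂(θ). Then f satisfies f'(θ) = Ĉ·f(θ)/(sin θ·R₂(θ)) for all θ ∈ (0, π/2) if and only if Y₂ satisfies (log Y₂)'(θ) = −(1 − Ĉ)/(√(L₉(θ))·sin θ) for all θ ∈ (0, π/2). -/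
/-!
Writing `f = φ · Y₂` with `φ = C₁₇ sin θ / R₂`, the equation `f' = a f` is equivalent to
`(log Y₂)' = a - φ'/φ`. With `q = √L₉`, `R₂' = -sin θ (q + (1 - TĈ) cos θ) / q`, and using
`q² = TĈ - Ĉ + (1 - TĈ) cos² θ` and `sin² θ = 1 - cos² θ` the numerator of
`Ĉ/(sin θ R₂) - φ'/φ` collapses to `-(1 - Ĉ) R₂`, which leaves `-(1 - Ĉ)/(q sin θ)`.
-/

open Real Set

theorem deriv_mul_eq_mul_iff_deriv_log_eq {φ Y : ℝ → ℝ} {x a b : ℝ}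
    (hφ : HasDerivAt φ ((a - b) * φ x) x) (hφx : φ x ≠ 0)
    (hY : DifferentiableAt ℝ Y x) (hYx : Y x ≠ 0) :
    deriv (fun t => φ t * Y t) x = a * (φ x * Y x) ↔ deriv (fun t => log (Y t)) x = b := by
  rw [(hφ.fun_mul hY.hasDerivAt).deriv, (hY.hasDerivAt.log hYx).deriv, div_eq_iff hYx]
  constructor
  · intro h
    apply mul_left_cancel₀ hφx
    linear_combination h
  · intro h
    linear_combination φ x * h

noncomputable def L9 (T C θ : ℝ) : ℝ := T * C - C + (1 - T * C) * cos θ ^ 2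

noncomputable def R2 (T C θ : ℝ) : ℝ := cos θ + √(L9 T C θ)

section

variable {T C : ℝ}

theorem L9_pos (hT : 1 < T) (hC : 0 < C) (hTC : T * C < 1) (θ : ℝ) : 0 < L9 T C θ := by
  have : 0 < T * C - C := by nlinarith
  unfold L9
  nlinarith [sq_nonneg (cos θ)]

theorem R2_pos {θ : ℝ} (hL : 0 < L9 T C θ) (hcos : 0 ≤ cos θ) : 0 < R2 T C θ :=
  add_pos_of_nonneg_of_pos hcos (sqrt_pos.2 hL)

theorem hasDerivAt_L9 (θ : ℝ) :
    HasDerivAt (L9 T C) (-(2 * (1 - T * C) * cos θ * sin θ)) θ := by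
  refine ((((hasDerivAt_cos θ).fun_pow 2).const_mul (1 - T * C)).const_add
    (T * C - C)).congr_deriv ?_
  ring

theorem hasDerivAt_R2 {θ : ℝ} (hL : 0 < L9 T C θ) :
    HasDerivAt (R2 T C)
      (-sin θ * (√(L9 T C θ) + (1 - T * C) * cos θ) / √(L9 T C θ)) θ := by
  have hq : √(L9 T C θ) ≠ 0 := (sqrt_pos.2 hL).ne'
  refine ((hasDerivAt_cos θ).add ((hasDerivAt_L9 θ).sqrt hL.ne')).congr_deriv ?_
  field_simp
  ring

theorem hasDerivAt_mul_sin_div_R2 (K : ℝ) {θ : ℝ} (hL : 0 < L9 T C θ) (hs : sin θ ≠ 0)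
    (hR : R2 T C θ ≠ 0) :
    HasDerivAt (fun x => K * sin x / R2 T C x)
      ((C / (sin θ * R2 T C θ) + (1 - C) / (√(L9 T C θ) * sin θ))
        * (K * sin θ / R2 T C θ)) θ := by
  have hq : √(L9 T C θ) ≠ 0 := (sqrt_pos.2 hL).ne'
  have hqsq : √(L9 T C θ) ^ 2 = T * C - C + (1 - T * C) * cos θ ^ 2 := sq_sqrt hL.le
  refine (((hasDerivAt_sin θ).const_mul K).fun_div (hasDerivAt_R2 hL) hR).congr_deriv ?_
  unfold R2 at hR ⊢
  field_simp
  linear_combination K * cos θ * hqsq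
    + K * (√(L9 T C θ) + (1 - T * C) * cos θ) * sin_sq_add_cos_sq θ

end

theorem stmt_10_general
    (T C C₁₇ : ℝ) (hT : 1 < T) (hC0 : 0 < C) (hTC : T * C < 1)
    (hC₁₇ : 0 < C₁₇)
    (L₉ R₂ : ℝ → ℝ)
    (hL₉ : ∀ θ : ℝ, L₉ θ = T * C - C + (1 - T * C) * (Real.cos θ) ^ 2)
    (hR₂ : ∀ θ : ℝ, R₂ θ = Real.cos θ + Real.sqrt (L₉ θ))
    (Y₂ : ℝ → ℝ)
    (hY₂pos : ∀ θ ∈ Ioo (0:ℝ) (π / 2), 0 < Y₂ θ)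
    (hY₂diff : ∀ θ ∈ Ioo (0:ℝ) (π / 2), DifferentiableAt ℝ Y₂ θ)
    (f : ℝ → ℝ)
    (hf : ∀ θ : ℝ, f θ = C₁₇ * Real.sin θ * Y₂ θ / R₂ θ) :
    (∀ θ ∈ Ioo (0:ℝ) (π / 2),
        deriv f θ = C * f θ / (Real.sin θ * R₂ θ))
      ↔
    (∀ θ ∈ Ioo (0:ℝ) (π / 2),
        deriv (fun x => Real.log (Y₂ x)) θ
          = -(1 - C) / (Real.sqrt (L₉ θ) * Real.sin θ)) := by
  obtain rfl : L₉ = L9 T C := funext hL₉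
  obtain rfl : R₂ = R2 T C := funext hR₂
  obtain rfl : f = fun x => C₁₇ * sin x / R2 T C x * Y₂ x := by
    funext x
    rw [hf, mul_div_right_comm]
  refine forall₂_congr fun θ hθ => ?_
  have hs : 0 < sin θ := sin_pos_of_pos_of_lt_pi hθ.1 (by linarith [hθ.2, pi_pos])
  have hL := L9_pos hT hC0 hTC θ
  have hR : 0 < R2 T C θ :=
    R2_pos hL (cos_pos_of_mem_Ioo ⟨by linarith [hθ.1, pi_pos], hθ.2⟩).le
  rw [mul_div_right_comm, neg_div]
  refine deriv_mul_eq_mul_iff_deriv_log_eq ?_ (by positivity) (hY₂diff θ hθ) (hY₂pos θ hθ).ne'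
  simpa only [sub_neg_eq_add] using hasDerivAt_mul_sin_div_R2 C₁₇ hL hs.ne' hR.ne'

/-- Derivation of (5.22) from (5.17): with `f = C₁₇·sin θ·Y₂/R₂`, the ODE
`f' = Ĉ·f/(sin θ·R₂)` holds on `(0, π/2)` iff
`(log Y₂)' = −(1 − Ĉ)/(√L₉·sin θ)`. -/
theorem stmt_10
    (T C C₁₇ : ℝ) (hT : 1 < T) (hC0 : 0 < C) (hC1 : C < 1) (hTC : T * C < 1)
    (hC₁₇ : 0 < C₁₇)
    (L₉ R₂ : ℝ → ℝ)
    (hL₉ : ∀ θ : ℝ, L₉ θ = T * C - C + (1 - T * C) * (Real.cos θ) ^ 2)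
    (hR₂ : ∀ θ : ℝ, R₂ θ = Real.cos θ + Real.sqrt (L₉ θ))
    (Y₂ : ℝ → ℝ)
    (hY₂pos : ∀ θ ∈ Ioo (0:ℝ) (π / 2), 0 < Y₂ θ)
    (hY₂diff : ∀ θ ∈ Ioo (0:ℝ) (π / 2), DifferentiableAt ℝ Y₂ θ)
    (f : ℝ → ℝ)
    (hf : ∀ θ : ℝ, f θ = C₁₇ * Real.sin θ * Y₂ θ / R₂ θ) :
    (∀ θ ∈ Ioo (0:ℝ) (π / 2),
        deriv f θ = C * f θ / (Real.sin θ * R₂ θ))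
      ↔
    (∀ θ ∈ Ioo (0:ℝ) (π / 2),
        deriv (fun x => Real.log (Y₂ x)) θ
          = -(1 - C) / (Real.sqrt (L₉ θ) * Real.sin θ)) :=
  stmt_10_general T C C₁₇ hT hC0 hTC hC₁₇ L₉ R₂ hL₉ hR₂ Y₂ hY₂pos hY₂diff f hf
end

section
/- Let T, Ĉ be real numbers with T > 1, 0 < Ĉ < 1 and TĈ < 1, set A = (1 − Ĉ)/(ĈT − Ĉ) and L₉(θ) = TĈ − Ĉ + (1 − TĈ)·cos²θ. Define, for θ ∈ (0, π/2), Y₂(θ) = [(√(tan²θ + A) + √A)/(√(tan²θ + A) − √A)]^{(1/2)√(1−Ĉ)}. Then Y₂ is positive and differentiable on (0, π/2) and satisfies (log Y₂)'(θ) = −(1 − Ĉ)/(√(L₉(θ))·sin θ) for all θ ∈ (0, π/2). -/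
/-!
Write `a = √A`, `B = CT - C` and `u = √(t² + A)`. Since `u² - a² = t²`, the function
`t ↦ log ((u + a) / (u - a))` has derivative `-2a / (t u)`; substituting `t = tan θ` gives
`-2a / (sin θ cos θ u)`. On the other side `L₉ = B sin²θ + (1 - C) cos²θ = B cos²θ u²` because
`A = (1 - C) / B`, so `√L₉ = √B cos θ u`, and `a √B = √(1 - C)` makes the constants agree.
-/

open Real Set Filter Topology

noncomputable def sqrtRatio (A t : ℝ) : ℝ :=
  (√(t ^ 2 + A) + √A) / (√(t ^ 2 + A) - √A)

section
variable {A t : ℝ}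

theorem sqrt_lt_sqrt_sq_add (hA : 0 ≤ A) (ht : t ≠ 0) : √A < √(t ^ 2 + A) :=
  Real.sqrt_lt_sqrt hA (lt_add_of_pos_left A (by positivity))

theorem one_lt_sqrtRatio (hA : 0 < A) (ht : t ≠ 0) : 1 < sqrtRatio A t := by
  have ha := Real.sqrt_pos.mpr hA
  have hu := sqrt_lt_sqrt_sq_add hA.le ht
  rw [sqrtRatio, one_lt_div (by linarith)]
  linarith

theorem hasDerivAt_sqrt_sq_add (ht : t ^ 2 + A ≠ 0) :
    HasDerivAt (fun t => √(t ^ 2 + A)) (t / √(t ^ 2 + A)) t := by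
  convert ((hasDerivAt_pow 2 t).add_const A).sqrt ht using 1
  field_simp
  ring

theorem hasDerivAt_sqrtRatio (hA : 0 < A) (ht : t ≠ 0) :
    HasDerivAt (sqrtRatio A) (-2 * √A / (t * √(t ^ 2 + A)) * sqrtRatio A t) t := by
  have ha := Real.sqrt_pos.mpr hA
  have hua := sqrt_lt_sqrt_sq_add hA.le ht
  have hu2 : √(t ^ 2 + A) ^ 2 = t ^ 2 + A := Real.sq_sqrt (by positivity)
  have ha2 : √A ^ 2 = A := Real.sq_sqrt hA.le
  have hd := hasDerivAt_sqrt_sq_add (A := A) (t := t) (by positivity)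
  refine ((hd.add_const √A).div (hd.sub_const √A) (by linarith)).congr_deriv ?_
  have hden : √(t ^ 2 + A) - √A ≠ 0 := by linarith
  unfold sqrtRatio
  field_simp
  linear_combination 2 * √A * (hu2 - ha2)

theorem hasDerivAt_log_sqrtRatio_tan {θ : ℝ} (hA : 0 < A) (hs : sin θ ≠ 0) (hc : cos θ ≠ 0) :
    HasDerivAt (fun θ => log (sqrtRatio A (tan θ)))
      (-2 * √A / (sin θ * cos θ * √(tan θ ^ 2 + A))) θ := by
  have ht : tan θ ≠ 0 := by rw [tan_eq_sin_div_cos]; exact div_ne_zero hs hc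
  have hR := one_lt_sqrtRatio hA ht
  refine (((hasDerivAt_sqrtRatio hA ht).comp θ (hasDerivAt_tan hc)).log
    (by positivity)).congr_deriv ?_
  simp only [Function.comp_apply]
  field_simp
  rw [tan_eq_sin_div_cos]
  field_simp

end

theorem sqrt_mul_sin_sq_add_mul_cos_sq {B D θ : ℝ} (hB : 0 < B) (hc : 0 < cos θ) :
    √(B * sin θ ^ 2 + D * cos θ ^ 2) = √B * (cos θ * √(tan θ ^ 2 + D / B)) := by
  have : B * sin θ ^ 2 + D * cos θ ^ 2 = B * (cos θ ^ 2 * (tan θ ^ 2 + D / B)) := by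
    rw [tan_eq_sin_div_cos]
    field_simp
  rw [this, Real.sqrt_mul hB.le, Real.sqrt_mul (by positivity), Real.sqrt_sq hc.le]

theorem stmt_11_general
    (T C : ℝ) (hT : 1 < T) (hC0 : 0 < C) (hC1 : C < 1)
    (A : ℝ) (hA : A = (1 - C) / (C * T - C))
    (L₉ : ℝ → ℝ)
    (hL₉ : ∀ θ : ℝ, L₉ θ = T * C - C + (1 - T * C) * (Real.cos θ) ^ 2)
    (Y₂ : ℝ → ℝ)
    (hY₂ : ∀ θ ∈ Ioo (0:ℝ) (π / 2),
      Y₂ θ =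
        ((Real.sqrt ((Real.tan θ) ^ 2 + A) + Real.sqrt A)
          / (Real.sqrt ((Real.tan θ) ^ 2 + A) - Real.sqrt A))
        ^ ((1 / 2) * Real.sqrt (1 - C))) :
    (∀ θ ∈ Ioo (0:ℝ) (π / 2), 0 < Y₂ θ) ∧
    (∀ θ ∈ Ioo (0:ℝ) (π / 2), DifferentiableAt ℝ Y₂ θ) ∧
    (∀ θ ∈ Ioo (0:ℝ) (π / 2),
      deriv (fun x => Real.log (Y₂ x)) θ
        = -(1 - C) / (Real.sqrt (L₉ θ) * Real.sin θ)) := by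
  set p := 1 / 2 * √(1 - C)
  have hB : 0 < C * T - C := by nlinarith
  have hA0 : 0 < A := hA ▸ div_pos (by linarith) hB
  have hsc : ∀ θ ∈ Ioo 0 (π / 2), 0 < sin θ ∧ 0 < cos θ := fun θ hθ =>
    ⟨sin_pos_of_pos_of_lt_pi hθ.1 (by linarith [hθ.2, pi_pos]),
      cos_pos_of_mem_Ioo ⟨by linarith [hθ.1, pi_pos], hθ.2⟩⟩
  have hbase : ∀ θ ∈ Ioo 0 (π / 2), 1 < sqrtRatio A (tan θ) := fun θ hθ =>
    one_lt_sqrtRatio hA0 (tan_pos_of_pos_of_lt_pi_div_two hθ.1 hθ.2).ne'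
  refine ⟨fun θ hθ => ?_, fun θ hθ => ?_, fun θ hθ => ?_⟩
  · rw [hY₂ θ hθ]
    exact rpow_pos_of_pos (one_pos.trans (hbase θ hθ)) _
  · have hc := (hsc θ hθ).2
    have ht := (tan_pos_of_pos_of_lt_pi_div_two hθ.1 hθ.2).ne'
    have hY : Y₂ =ᶠ[𝓝 θ] fun x => sqrtRatio A (tan x) ^ p :=
      eventually_of_mem (isOpen_Ioo.mem_nhds hθ) hY₂
    refine hY.differentiableAt_iff.mpr ?_
    exact ((hasDerivAt_sqrtRatio hA0 ht).comp θ (hasDerivAt_tan hc.ne')).differentiableAt.rpow_const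
      (Or.inl (one_pos.trans (hbase θ hθ)).ne')
  · obtain ⟨hs, hc⟩ := hsc θ hθ
    have hlog : (fun x => log (Y₂ x)) =ᶠ[𝓝 θ] fun x => p * log (sqrtRatio A (tan x)) := by
      filter_upwards [isOpen_Ioo.mem_nhds hθ] with x hx
      rw [hY₂ x hx]
      exact log_rpow (one_pos.trans (hbase x hx)) p
    have hL : L₉ θ = (C * T - C) * sin θ ^ 2 + (1 - C) * cos θ ^ 2 := by
      rw [hL₉]; linear_combination (C - T * C) * sin_sq_add_cos_sq θ
    have hsqrtA : √A = √(1 - C) / √(C * T - C) := by rw [hA, sqrt_div' _ hB.le]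
    rw [hlog.deriv_eq, ((hasDerivAt_log_sqrtRatio_tan hA0 hs.ne' hc.ne').const_mul p).deriv, hL,
      sqrt_mul_sin_sq_add_mul_cos_sq hB hc, ← hA, hsqrtA]
    have hu : 0 < √(tan θ ^ 2 + A) := sqrt_pos.mpr (by positivity)
    have hw : 0 < √(C * T - C) := sqrt_pos.mpr hB
    simp only [p]
    field_simp
    rw [sq_sqrt (by linarith)]

/-- The integration producing Formula (5.23): the explicit function `Y₂`
solves `(log Y₂)' = −(1 − Ĉ)/(√L₉·sin θ)` on `(0, π/2)`. -/
theorem stmt_11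
    (T C : ℝ) (hT : 1 < T) (hC0 : 0 < C) (hC1 : C < 1) (hTC : T * C < 1)
    (A : ℝ) (hA : A = (1 - C) / (C * T - C))
    (L₉ : ℝ → ℝ)
    (hL₉ : ∀ θ : ℝ, L₉ θ = T * C - C + (1 - T * C) * (Real.cos θ) ^ 2)
    (Y₂ : ℝ → ℝ)
    (hY₂ : ∀ θ ∈ Ioo (0:ℝ) (π / 2),
      Y₂ θ =
        ((Real.sqrt ((Real.tan θ) ^ 2 + A) + Real.sqrt A)
          / (Real.sqrt ((Real.tan θ) ^ 2 + A) - Real.sqrt A))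
        ^ ((1 / 2) * Real.sqrt (1 - C))) :
    (∀ θ ∈ Ioo (0:ℝ) (π / 2), 0 < Y₂ θ) ∧
    (∀ θ ∈ Ioo (0:ℝ) (π / 2), DifferentiableAt ℝ Y₂ θ) ∧
    (∀ θ ∈ Ioo (0:ℝ) (π / 2),
      deriv (fun x => Real.log (Y₂ x)) θ
        = -(1 - C) / (Real.sqrt (L₉ θ) * Real.sin θ)) :=
  stmt_11_general T C hT hC0 hC1 A hA L₉ hL₉ Y₂ hY₂
end

section
/- Let T, Ĉ be real numbers with T > 1, 0 < Ĉ < 1 and TĈ < 1, and C₃₉ > 0. For real parameters T and Ĉ, define L₉(θ) = TĈ − Ĉ + (1 − TĈ)·cos²θ and R₂(θ) = cos θ + √(L₉(θ)). Let I : (0, π/2) → (0,∞) be differentiable and set U(θ) = C₃₉·I(θ)/R₂(θ). Then U satisfies U'(θ)/U(θ) = TĈ·sin θ/R₂(θ) for all θ ∈ (0, π/2) if and only if I satisfies (log I)'(θ) = −(1 − TĈ)·sin θ/√(L₉(θ)) for all θ ∈ (0, π/2). -/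
open Real Set

/-- Derivation of (5.25) from (5.18): with `U = C₃₉·I/R₂`, the ODE
`U'/U = TĈ·sin θ/R₂` holds on `(0, π/2)` iff
`(log I)' = −(1 − TĈ)·sin θ/√L₉`. -/
theorem stmt_12
    (T C C₃₉ : ℝ) (hT : 1 < T) (hC0 : 0 < C) (hC1 : C < 1) (hTC : T * C < 1)
    (hC₃₉ : 0 < C₃₉)
    (L₉ R₂ : ℝ → ℝ)
    (hL₉ : ∀ θ : ℝ, L₉ θ = T * C - C + (1 - T * C) * (Real.cos θ) ^ 2)
    (hR₂ : ∀ θ : ℝ, R₂ θ = Real.cos θ + Real.sqrt (L₉ θ))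
    (I : ℝ → ℝ)
    (hIpos : ∀ θ ∈ Ioo (0:ℝ) (π / 2), 0 < I θ)
    (hIdiff : ∀ θ ∈ Ioo (0:ℝ) (π / 2), DifferentiableAt ℝ I θ)
    (U : ℝ → ℝ)
    (hU : ∀ θ : ℝ, U θ = C₃₉ * I θ / R₂ θ) :
    (∀ θ ∈ Ioo (0:ℝ) (π / 2),
        deriv U θ / U θ = T * C * Real.sin θ / R₂ θ)
      ↔
    (∀ θ ∈ Ioo (0:ℝ) (π / 2),
        deriv (fun x => Real.log (I x)) θ
          = -(1 - T * C) * Real.sin θ / Real.sqrt (L₉ θ)) := by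
  have key : ∀ θ ∈ Ioo (0:ℝ) (π / 2),
      (deriv U θ / U θ = T * C * Real.sin θ / R₂ θ ↔
        deriv (fun x => Real.log (I x)) θ
          = -(1 - T * C) * Real.sin θ / Real.sqrt (L₉ θ)) := by
    intro θ hθ
    obtain ⟨hθ0, hθ2⟩ := hθ
    have hcos : 0 < Real.cos θ :=
      Real.cos_pos_of_mem_Ioo ⟨by linarith [Real.pi_pos], hθ2⟩
    have hL : 0 < L₉ θ := by
      rw [hL₉]
      nlinarith [sq_nonneg (Real.cos θ)]
    have hs0 : 0 < Real.sqrt (L₉ θ) := Real.sqrt_pos.mpr hL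
    have hRpos : 0 < R₂ θ := by rw [hR₂]; linarith
    have hI0 : 0 < I θ := hIpos θ ⟨hθ0, hθ2⟩
    have hId := hIdiff θ ⟨hθ0, hθ2⟩
    -- derivative of L₉
    have hLfun : L₉ = fun x => T * C - C + (1 - T * C) * (Real.cos x) ^ 2 :=
      funext hL₉
    have hLd : HasDerivAt L₉
        ((1 - T * C) * ((2 : ℕ) * Real.cos θ ^ 1 * (-Real.sin θ))) θ := by
      rw [hLfun]
      exact (((Real.hasDerivAt_cos θ).pow 2).const_mul (1 - T * C)).const_add _
    -- derivative of √L₉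
    have hsd : HasDerivAt (fun x => Real.sqrt (L₉ x))
        ((1 - T * C) * ((2 : ℕ) * Real.cos θ ^ 1 * (-Real.sin θ)) /
          (2 * Real.sqrt (L₉ θ))) θ := hLd.sqrt hL.ne'
    -- derivative of R₂
    have hRfun : R₂ = fun x => Real.cos x + Real.sqrt (L₉ x) := funext hR₂
    set r' : ℝ := -Real.sin θ +
        (1 - T * C) * ((2 : ℕ) * Real.cos θ ^ 1 * (-Real.sin θ)) /
          (2 * Real.sqrt (L₉ θ)) with hr'
    have hRd : HasDerivAt R₂ r' θ := by
      rw [hRfun]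
      exact (Real.hasDerivAt_cos θ).add hsd
    -- derivative of U
    have hUfun : U = fun x => C₃₉ * I x / R₂ x := funext hU
    have hUd : HasDerivAt U
        ((C₃₉ * deriv I θ * R₂ θ - C₃₉ * I θ * r') / R₂ θ ^ 2) θ := by
      rw [hUfun]
      exact ((hId.hasDerivAt.const_mul C₃₉).div hRd hRpos.ne')
    have hUderiv : deriv U θ =
        (C₃₉ * deriv I θ * R₂ θ - C₃₉ * I θ * r') / R₂ θ ^ 2 := hUd.deriv
    -- derivative of log ∘ I
    have hlog : deriv (fun x => Real.log (I x)) θ = deriv I θ / I θ :=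
      (hId.hasDerivAt.log hI0.ne').deriv
    -- U'/U = I'/I - R₂'/R₂
    have hquot : deriv U θ / U θ = deriv I θ / I θ - r' / R₂ θ := by
      rw [hUderiv, hU θ]
      field_simp
    -- key algebraic identity
    have hid : T * C * Real.sin θ / R₂ θ + r' / R₂ θ
        = -(1 - T * C) * Real.sin θ / Real.sqrt (L₉ θ) := by
      have hcs : Real.cos θ + Real.sqrt (L₉ θ) = R₂ θ := (hR₂ θ).symm
      have hsq : Real.sqrt (L₉ θ) * Real.sqrt (L₉ θ) = L₉ θ :=
        Real.mul_self_sqrt hL.le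
      rw [hr', hR₂ θ]
      have hR' : 0 < Real.cos θ + Real.sqrt (L₉ θ) := by linarith
      field_simp
      ring
    rw [hquot, hlog]
    constructor <;> intro h <;> linarith
  constructor <;> intro h θ hθ
  · exact (key θ hθ).mp (h θ hθ)
  · exact (key θ hθ).mpr (h θ hθ)
end

section
/- Let T, Ĉ be real numbers with T > 1, 0 < Ĉ < 1 and TĈ < 1, and define L₉(θ) = TĈ − Ĉ + (1 − TĈ)·cos²θ. Define I(θ) = (√(1 − TĈ)·cos θ + √(L₉(θ)))^{√(1−TĈ)} for θ ∈ ℝ. Then the base √(1 − TĈ)·cos θ + √(L₉(θ)) is strictly positive for every θ ∈ ℝ, I is differentiable, and (log I)'(θ) = −(1 − TĈ)·sin θ/√(L₉(θ)) for all θ ∈ ℝ. -/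
open Real

/-! With `a = 1 − TĈ` and `b = Ĉ(T − 1) > 0` we have `L₉ = b + (√a cos θ)²`, so the base is
`u + √(b + u²)` for `u = √a cos θ`. This is positive because `√(b + u²) > |u|`, and
`log (u + √(b + u²))` (a shifted `arsinh (u / √b)`) has derivative `u' / √(b + u²)`. -/

lemma add_sqrt_add_sq_pos {b : ℝ} (hb : 0 < b) (u : ℝ) : 0 < u + √(b + u ^ 2) := by
  have : |u| < √(b + u ^ 2) := by
    rw [← sqrt_sq_eq_abs]
    exact sqrt_lt_sqrt (sq_nonneg u) (by linarith)
  linarith [neg_abs_le u]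

lemma HasDerivAt.add_sqrt_add_sq {f : ℝ → ℝ} {f' b x : ℝ} (hb : 0 < b) (hf : HasDerivAt f f' x) :
    HasDerivAt (fun t => f t + √(b + f t ^ 2))
      (f' * (f x + √(b + f x ^ 2)) / √(b + f x ^ 2)) x := by
  have hpos : 0 < b + f x ^ 2 := by positivity
  have hsqrt := ((hf.fun_pow 2).const_add b).sqrt hpos.ne'
  refine (hf.add hsqrt).congr_deriv ?_
  field_simp
  ring

lemma HasDerivAt.log_add_sqrt_add_sq {f : ℝ → ℝ} {f' b x : ℝ} (hb : 0 < b)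
    (hf : HasDerivAt f f' x) :
    HasDerivAt (fun t => Real.log (f t + √(b + f t ^ 2))) (f' / √(b + f x ^ 2)) x := by
  have hbase := add_sqrt_add_sq_pos hb (f x)
  convert (hf.add_sqrt_add_sq hb).log hbase.ne' using 1
  field_simp

theorem stmt_13_general
    (T C : ℝ) (hT : 1 < T) (hC0 : 0 < C) (hTC : T * C < 1)
    (L₉ : ℝ → ℝ)
    (hL₉ : ∀ θ : ℝ, L₉ θ = T * C - C + (1 - T * C) * (Real.cos θ) ^ 2)
    (I : ℝ → ℝ)
    (hI : ∀ θ : ℝ,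
      I θ = (Real.sqrt (1 - T * C) * Real.cos θ + Real.sqrt (L₉ θ))
              ^ Real.sqrt (1 - T * C)) :
    (∀ θ : ℝ, 0 < Real.sqrt (1 - T * C) * Real.cos θ + Real.sqrt (L₉ θ)) ∧
    Differentiable ℝ I ∧
    (∀ θ : ℝ,
      deriv (fun x => Real.log (I x)) θ
        = -(1 - T * C) * Real.sin θ / Real.sqrt (L₉ θ)) := by
  set a := 1 - T * C
  have ha : 0 ≤ a := by linarith
  have hb : 0 < T * C - C := by nlinarith
  have hL : L₉ = fun θ => T * C - C + (√a * cos θ) ^ 2 := by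
    funext θ
    rw [hL₉, mul_pow, sq_sqrt ha]
  have hI' : I = fun θ => (√a * cos θ + √(L₉ θ)) ^ √a := funext hI
  subst hL hI'
  have hu (θ : ℝ) : HasDerivAt (fun t => √a * cos t) (√a * -sin θ) θ :=
    (hasDerivAt_cos θ).const_mul √a
  have hbase (θ : ℝ) := add_sqrt_add_sq_pos hb (√a * cos θ)
  refine ⟨hbase, fun θ => ((hu θ).add_sqrt_add_sq hb).differentiableAt.rpow_const
    (Or.inl (hbase θ).ne'), fun θ => ?_⟩
  have hlog : (fun x => log ((√a * cos x + √(T * C - C + (√a * cos x) ^ 2)) ^ √a))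
      = fun x => √a * log (√a * cos x + √(T * C - C + (√a * cos x) ^ 2)) :=
    funext fun x => log_rpow (hbase x) _
  rw [hlog, (((hu θ).log_add_sqrt_add_sq hb).const_mul √a).deriv]
  have hsa : √a * √a = a := mul_self_sqrt ha
  linear_combination (-sin θ / √(T * C - C + (√a * cos θ) ^ 2)) * hsa

/-- The integration producing Formula (5.26): the explicit function
`I = (√(1 − TĈ)·cos θ + √L₉)^{√(1−TĈ)}` has strictly positive base, is
differentiable, and solves `(log I)' = −(1 − TĈ)·sin θ/√L₉` on `ℝ`. -/
theorem stmt_13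
    (T C : ℝ) (hT : 1 < T) (hC0 : 0 < C) (hC1 : C < 1) (hTC : T * C < 1)
    (L₉ : ℝ → ℝ)
    (hL₉ : ∀ θ : ℝ, L₉ θ = T * C - C + (1 - T * C) * (Real.cos θ) ^ 2)
    (I : ℝ → ℝ)
    (hI : ∀ θ : ℝ,
      I θ = (Real.sqrt (1 - T * C) * Real.cos θ + Real.sqrt (L₉ θ))
              ^ Real.sqrt (1 - T * C)) :
    (∀ θ : ℝ, 0 < Real.sqrt (1 - T * C) * Real.cos θ + Real.sqrt (L₉ θ)) ∧
    Differentiable ℝ I ∧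
    (∀ θ : ℝ,
      deriv (fun x => Real.log (I x)) θ
        = -(1 - T * C) * Real.sin θ / Real.sqrt (L₉ θ)) :=
  stmt_13_general T C hT hC0 hTC L₉ hL₉ I hI
end

section
/- Let T, Ĉ be real numbers with T > 1, 0 < Ĉ < 1 and TĈ < 1. For real parameters T and Ĉ, define L₉(θ) = TĈ − Ĉ + (1 − TĈ)·cos²θ and R₂(θ) = cos θ + √(L₉(θ)). Let J ⊆ (0,∞) be an open interval and let θ : J → (0, π) and U : J → (0,∞) be differentiable functions satisfying, for all f ∈ J: f·θ'(f) = (1/Ĉ)·R₂(θ(f))·sin(θ(f)) and f·U'(f) = T·sin²(θ(f))·U(f). Then U is twice differentiable on J and U''(f) = TĈ·U(f)·θ'(f)² for all f ∈ J. -/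
open Real Set Filter Topology

/- Writing `U' = h U / f` with `h = T sin²θ`, the quotient rule together with `f U' = h U` gives
`f U'' = h' U + (h - 1) U'`. Substituting `f θ' = R₂ sin θ / Ĉ` and `f U' = T sin²θ U`, the claim
`Ĉ f² (U'' - TĈ U θ'²) = 0` becomes `T U sin²θ` times the identity
`R₂² - 2 cos θ R₂ = Ĉ (T sin²θ - 1)`, which holds because `R₂ - cos θ = √L₉` and
`L₉ - cos²θ = Ĉ (T sin²θ - 1)`. -/

lemma sq_sub_two_mul_cos_mul_cos_add_sqrt {T C : ℝ} (hT : 1 ≤ T) (hC0 : 0 ≤ C) (hC1 : C ≤ 1)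
    (x : ℝ) :
    let R := cos x + √(T * C - C + (1 - T * C) * cos x ^ 2)
    R ^ 2 - 2 * cos x * R = C * (T * sin x ^ 2 - 1) := by
  intro R
  have hL : 0 ≤ T * C - C + (1 - T * C) * cos x ^ 2 := by
    have h₁ : 0 ≤ T - 1 := by linarith
    have h₂ : 0 ≤ 1 - C := by linarith
    have hconvex : T * C - C + (1 - T * C) * cos x ^ 2
        = (T - 1) * C * sin x ^ 2 + (1 - C) * cos x ^ 2 := by
      linear_combination -(T - 1) * C * sin_sq_add_cos_sq x
    rw [hconvex]
    positivity
  have hsqrt := sq_sqrt hL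
  linear_combination hsqrt - C * T * sin_sq_add_cos_sq x

lemma hasDerivAt_deriv_of_mul_deriv_eq {h U : ℝ → ℝ} {x h' : ℝ} (hx : x ≠ 0)
    (hode : ∀ᶠ y in 𝓝 x, y * deriv U y = h y * U y) (hh : HasDerivAt h h' x)
    (hU : DifferentiableAt ℝ U x) :
    HasDerivAt (deriv U) ((h' * U x + (h x - 1) * deriv U x) / x) x := by
  have hquot : HasDerivAt (fun y => h y * U y / y)
      (((h' * U x + h x * deriv U x) * x - h x * U x * 1) / x ^ 2) x :=
    (hh.mul hU.hasDerivAt).div (hasDerivAt_id x) hx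
  have heq : deriv U =ᶠ[𝓝 x] fun y => h y * U y / y := by
    filter_upwards [hode, eventually_ne_nhds hx] with y hy hy0
    rw [← hy, mul_div_cancel_left₀ _ hy0]
  refine (hquot.congr_of_eventuallyEq heq).congr_deriv ?_
  rw [← hode.self_of_nhds]
  field_simp
  ring

theorem stmt_16_general
    (T C : ℝ) (hT : 1 < T) (hC0 : 0 < C) (hC1 : C < 1)
    (L₉ R₂ : ℝ → ℝ)
    (hL₉ : ∀ x : ℝ, L₉ x = T * C - C + (1 - T * C) * (Real.cos x) ^ 2)
    (hR₂ : ∀ x : ℝ, R₂ x = Real.cos x + Real.sqrt (L₉ x))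
    (a b : ℝ) (J : Set ℝ) (hJ : J = Ioo a b) (hJsub : J ⊆ Ioi (0:ℝ))
    (θ U : ℝ → ℝ)
    (hθdiff : ∀ f ∈ J, DifferentiableAt ℝ θ f)
    (hUdiff : ∀ f ∈ J, DifferentiableAt ℝ U f)
    (hθode : ∀ f ∈ J, f * deriv θ f = (1 / C) * R₂ (θ f) * Real.sin (θ f))
    (hUode : ∀ f ∈ J, f * deriv U f = T * (Real.sin (θ f)) ^ 2 * U f) :
    (∀ f ∈ J, DifferentiableAt ℝ (deriv U) f) ∧
    (∀ f ∈ J, deriv (deriv U) f = T * C * U f * (deriv θ f) ^ 2) := by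
  have hU'' : ∀ f ∈ J, HasDerivAt (deriv U) (T * C * U f * deriv θ f ^ 2) f := by
    intro f hf
    have hf0 : f ≠ 0 := (hJsub hf).ne'
    have hJnhds : J ∈ 𝓝 f := (hJ ▸ isOpen_Ioo : IsOpen J).mem_nhds hf
    have hh : HasDerivAt (fun y => T * sin (θ y) ^ 2)
        (T * (2 * sin (θ f) * (cos (θ f) * deriv θ f))) f := by
      simpa using (((hθdiff f hf).hasDerivAt.sin).pow 2).const_mul T
    have hθ' : C * (f * deriv θ f) = R₂ (θ f) * sin (θ f) := by
      rw [hθode f hf]; field_simp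
    have hR := sq_sub_two_mul_cos_mul_cos_add_sqrt hT.le hC0.le hC1.le (θ f)
    rw [← hL₉, ← hR₂] at hR
    convert hasDerivAt_deriv_of_mul_deriv_eq hf0 (eventually_of_mem hJnhds hUode) hh
      (hUdiff f hf) using 1
    rw [eq_div_iff hf0]
    apply mul_left_cancel₀ (mul_ne_zero hC0.ne' hf0)
    linear_combination T * U f * sin (θ f) ^ 2 * hR
      + (T * U f * (C * (f * deriv θ f) + R₂ (θ f) * sin (θ f))
        - 2 * T * sin (θ f) * cos (θ f) * U f) * hθ'
      - C * (T * sin (θ f) ^ 2 - 1) * hUode f hf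
  exact ⟨fun f hf => (hU'' f hf).differentiableAt, fun f hf => (hU'' f hf).deriv⟩

/-- Formula (5.20): from `f·θ' = (1/Ĉ)·R₂(θ)·sin θ` and
`f·U' = T·sin²θ·U`, the function `U` satisfies `U'' = TĈ·U·θ'²`. -/
theorem stmt_16
    (T C : ℝ) (hT : 1 < T) (hC0 : 0 < C) (hC1 : C < 1) (hTC : T * C < 1)
    (L₉ R₂ : ℝ → ℝ)
    (hL₉ : ∀ x : ℝ, L₉ x = T * C - C + (1 - T * C) * (Real.cos x) ^ 2)
    (hR₂ : ∀ x : ℝ, R₂ x = Real.cos x + Real.sqrt (L₉ x))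
    (a b : ℝ) (J : Set ℝ) (hJ : J = Ioo a b) (hJsub : J ⊆ Ioi (0:ℝ))
    (θ U : ℝ → ℝ)
    (hθmem : ∀ f ∈ J, θ f ∈ Ioo (0:ℝ) π)
    (hUpos : ∀ f ∈ J, 0 < U f)
    (hθdiff : ∀ f ∈ J, DifferentiableAt ℝ θ f)
    (hUdiff : ∀ f ∈ J, DifferentiableAt ℝ U f)
    (hθode : ∀ f ∈ J, f * deriv θ f = (1 / C) * R₂ (θ f) * Real.sin (θ f))
    (hUode : ∀ f ∈ J, f * deriv U f = T * (Real.sin (θ f)) ^ 2 * U f) :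
    (∀ f ∈ J, DifferentiableAt ℝ (deriv U) f) ∧
    (∀ f ∈ J, deriv (deriv U) f = T * C * U f * (deriv θ f) ^ 2) :=
  stmt_16_general T C hT hC0 hC1 L₉ R₂ hL₉ hR₂ a b J hJ hJsub θ U hθdiff hUdiff hθode hUode
end

section
/- Let H > 1 and P > 1 be real numbers. For real parameters H and P, define L̂(η) = 1 − 1/P + (1 − 1/H²)·sinh²η and R₁(η) = cosh η + √(L̂(η)). Let V, r : (0,∞) → (0,∞) be differentiable functions satisfying V'(η)/V(η) = −(1/H²)·sinh η/R₁(η) and r'(η)/r(η) = 1/(P·R₁(η)·sinh η) for all η ∈ (0,∞). Then V and r are twice differentiable, r'(η) ≠ 0, and for all η ∈ (0,∞): (1/H²)·(1/r'(η))² = −(1/V(η))·(V''(η)·r'(η) − V'(η)·r''(η))/r'(η)³; that is, regarding η as a function of r, (1/H²)·(dη/dr)² = −(1/V)·d²V/dr². -/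
open Real Set Filter Topology

/-!
Write `V' = V f` and `r' = r g` with `f = -(1/H²) sinh η / R₁` and `g = 1 / (P R₁ sinh η)`.
Then `V'' = V (f² + f')`, `r'' = r (g² + g')`, and the numerator of `V_rr` is
`V'' r' - V' r'' = V r (f' g - f g' + f g (f - g))`. The derivative of `R₁` cancels from
`f' g - f g'` (because `f / g = -(P/H²) sinh² η` does not involve `R₁`), and what is left equals
`-(1/H²) g` exactly because `R₁ - cosh η = √L̂` makes `R₁` a root of
`R² - 2 cosh η R + sinh² η / H² + 1/P = 0`.
-/

section LogDerivative

variable {𝕜 : Type*} [NontriviallyNormedField 𝕜] {V r f g : 𝕜 → 𝕜} {x f' g' k : 𝕜}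

theorem hasDerivAt_deriv_of_deriv_eventuallyEq_mul (hV : DifferentiableAt 𝕜 V x)
    (hf : HasDerivAt f f' x) (hVf : deriv V =ᶠ[𝓝 x] fun t => V t * f t) :
    HasDerivAt (deriv V) (V x * (f x ^ 2 + f')) x := by
  have h := (hV.hasDerivAt.fun_mul hf).congr_of_eventuallyEq hVf
  rw [hVf.eq_of_nhds] at h
  exact h.congr_deriv (by ring)

theorem deriv_deriv_mul_deriv_sub_deriv_mul_deriv_deriv_eq (hV : DifferentiableAt 𝕜 V x)
    (hr : DifferentiableAt 𝕜 r x) (hf : HasDerivAt f f' x) (hg : HasDerivAt g g' x)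
    (hVf : deriv V =ᶠ[𝓝 x] fun t => V t * f t) (hrg : deriv r =ᶠ[𝓝 x] fun t => r t * g t) :
    deriv (deriv V) x * deriv r x - deriv V x * deriv (deriv r) x
      = V x * r x * (f' * g x - f x * g' + f x * g x * (f x - g x)) := by
  rw [(hasDerivAt_deriv_of_deriv_eventuallyEq_mul hV hf hVf).deriv,
    (hasDerivAt_deriv_of_deriv_eventuallyEq_mul hr hg hrg).deriv, hVf.eq_of_nhds, hrg.eq_of_nhds]
  ring

/-- `(V'' r' - V' r'') / r'³` is `d²V/dr²` and `1 / r'` is `dη/dr`. -/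
theorem mul_one_div_deriv_sq_eq_of_logDeriv (hV : DifferentiableAt 𝕜 V x)
    (hr : DifferentiableAt 𝕜 r x) (hf : HasDerivAt f f' x) (hg : HasDerivAt g g' x)
    (hVf : deriv V =ᶠ[𝓝 x] fun t => V t * f t) (hrg : deriv r =ᶠ[𝓝 x] fun t => r t * g t)
    (hV0 : V x ≠ 0) (hr0 : r x ≠ 0) (hg0 : g x ≠ 0)
    (hfg : f' * g x - f x * g' + f x * g x * (f x - g x) = -k * g x) :
    DifferentiableAt 𝕜 (deriv V) x ∧ DifferentiableAt 𝕜 (deriv r) x ∧ deriv r x ≠ 0 ∧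
      k * (1 / deriv r x) ^ 2
        = -(1 / V x) * ((deriv (deriv V) x * deriv r x - deriv V x * deriv (deriv r) x)
            / deriv r x ^ 3) := by
  have hr' : deriv r x = r x * g x := hrg.eq_of_nhds
  refine ⟨(hasDerivAt_deriv_of_deriv_eventuallyEq_mul hV hf hVf).differentiableAt,
    (hasDerivAt_deriv_of_deriv_eventuallyEq_mul hr hg hrg).differentiableAt,
    hr' ▸ mul_ne_zero hr0 hg0, ?_⟩
  rw [deriv_deriv_mul_deriv_sub_deriv_mul_deriv_deriv_eq hV hr hf hg hVf hrg, hfg, hr']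
  field_simp

end LogDerivative

theorem hasDerivAt_neg_mul_sinh_div {R : ℝ → ℝ} {R' x k : ℝ} (hR : HasDerivAt R R' x)
    (hR0 : R x ≠ 0) :
    HasDerivAt (fun t => -k * sinh t / R t) (-k * (cosh x * R x - sinh x * R') / R x ^ 2) x :=
  (((hasDerivAt_sinh x).const_mul (-k)).fun_div hR hR0).congr_deriv (by ring)

theorem hasDerivAt_one_div_mul_mul_sinh {R : ℝ → ℝ} {R' x P : ℝ} (hR : HasDerivAt R R' x)
    (h0 : P * R x * sinh x ≠ 0) :
    HasDerivAt (fun t => 1 / (P * R t * sinh t))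
      (-(R' * sinh x + R x * cosh x) / (P * (R x * sinh x) ^ 2)) x := by
  refine ((hasDerivAt_const x (1 : ℝ)).fun_div ((hR.const_mul P).fun_mul (hasDerivAt_sinh x)) h0
    ).congr_deriv ?_
  field_simp
  ring

theorem cross_term_eq_of_quadratic {k P R R' s c : ℝ} (hP : P ≠ 0) (hR : R ≠ 0) (hs : s ≠ 0)
    (hq : R ^ 2 + k * s ^ 2 - 2 * c * R + 1 / P = 0) :
    -k * (c * R - s * R') / R ^ 2 * (1 / (P * R * s))
        - -k * s / R * (-(R' * s + R * c) / (P * (R * s) ^ 2))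
        + -k * s / R * (1 / (P * R * s)) * (-k * s / R - 1 / (P * R * s))
      = -k * (1 / (P * R * s)) := by
  field_simp
  linear_combination (norm := skip) (k * P) * hq
  field_simp
  ring

theorem cosh_add_sqrt_quadratic {k P x L : ℝ} (hL0 : 0 ≤ L)
    (hL : L = 1 - 1 / P + (1 - k) * sinh x ^ 2) :
    (cosh x + √L) ^ 2 + k * sinh x ^ 2 - 2 * cosh x * (cosh x + √L) + 1 / P = 0 := by
  linear_combination sq_sqrt hL0 - cosh_sq x + hL

theorem one_sub_one_div_add_mul_sinh_sq_pos {H P : ℝ} (hH : 1 < H) (hP : 1 < P) (x : ℝ) :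
    0 < 1 - 1 / P + (1 - 1 / H ^ 2) * sinh x ^ 2 := by
  have hP' : 1 / P < 1 := (div_lt_one (by positivity)).2 hP
  have hH' : 1 / H ^ 2 < 1 := (div_lt_one (by positivity)).2 (one_lt_pow₀ hH two_ne_zero)
  have : 0 ≤ (1 - 1 / H ^ 2) * sinh x ^ 2 := mul_nonneg (by linarith) (sq_nonneg _)
  linarith

/-- The 'simple and useful equality' (5.8): `(1/H²)(η_r)² = −(1/V)V_{rr}`,
expressed via the ODEs (5.6) and (5.7) for `V` and `r` as functions of `η`. -/
theorem stmt_17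
    (H P : ℝ) (hH : 1 < H) (hP : 1 < P)
    (Lhat R₁ : ℝ → ℝ)
    (hLhat : ∀ η : ℝ, Lhat η = 1 - 1 / P + (1 - 1 / H ^ 2) * (Real.sinh η) ^ 2)
    (hR₁ : ∀ η : ℝ, R₁ η = Real.cosh η + Real.sqrt (Lhat η))
    (V r : ℝ → ℝ)
    (hVpos : ∀ η ∈ Ioi (0:ℝ), 0 < V η)
    (hrpos : ∀ η ∈ Ioi (0:ℝ), 0 < r η)
    (hVdiff : ∀ η ∈ Ioi (0:ℝ), DifferentiableAt ℝ V η)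
    (hrdiff : ∀ η ∈ Ioi (0:ℝ), DifferentiableAt ℝ r η)
    (hVode : ∀ η ∈ Ioi (0:ℝ),
      deriv V η / V η = -(1 / H ^ 2) * Real.sinh η / R₁ η)
    (hrode : ∀ η ∈ Ioi (0:ℝ),
      deriv r η / r η = 1 / (P * R₁ η * Real.sinh η)) :
    (∀ η ∈ Ioi (0:ℝ), DifferentiableAt ℝ (deriv V) η) ∧
    (∀ η ∈ Ioi (0:ℝ), DifferentiableAt ℝ (deriv r) η) ∧
    (∀ η ∈ Ioi (0:ℝ), deriv r η ≠ 0) ∧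
    (∀ η ∈ Ioi (0:ℝ),
      (1 / H ^ 2) * (1 / deriv r η) ^ 2
        = -(1 / V η) *
            ((deriv (deriv V) η * deriv r η - deriv V η * deriv (deriv r) η)
              / (deriv r η) ^ 3)) := by
  have hL : ∀ t, 0 < Lhat t := fun t => hLhat t ▸ one_sub_one_div_add_mul_sinh_sq_pos hH hP t
  have hR₁pos : ∀ t, 0 < R₁ t := fun t =>
    hR₁ t ▸ add_pos_of_pos_of_nonneg (cosh_pos t) (sqrt_nonneg _)
  have hR₁diff : ∀ t, HasDerivAt R₁ (deriv R₁ t) t := by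
    obtain rfl : Lhat = _ := funext hLhat
    obtain rfl : R₁ = _ := funext hR₁
    exact fun t => (differentiable_cosh t |>.add <| DifferentiableAt.sqrt (by fun_prop)
      (hL t).ne').hasDerivAt
  have hquad : ∀ t, R₁ t ^ 2 + 1 / H ^ 2 * sinh t ^ 2 - 2 * cosh t * R₁ t + 1 / P = 0 :=
    fun t => hR₁ t ▸ cosh_add_sqrt_quadratic (hL t).le (hLhat t)
  have key : ∀ η ∈ Ioi (0:ℝ), _ := fun η (hη : 0 < η) =>
    have hs := (sinh_pos_iff.2 hη).ne'
    have hPRs : P * R₁ η * sinh η ≠ 0 :=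
      mul_ne_zero (mul_ne_zero (by positivity) (hR₁pos η).ne') hs
    mul_one_div_deriv_sq_eq_of_logDeriv (hVdiff η hη) (hrdiff η hη)
      (hasDerivAt_neg_mul_sinh_div (hR₁diff η) (hR₁pos η).ne')
      (hasDerivAt_one_div_mul_mul_sinh (hR₁diff η) hPRs)
      (eventually_of_mem (Ioi_mem_nhds hη) fun t ht =>
        by beta_reduce; rw [← hVode t ht, mul_div_cancel₀ _ (hVpos t ht).ne'])
      (eventually_of_mem (Ioi_mem_nhds hη) fun t ht =>
        by beta_reduce; rw [← hrode t ht, mul_div_cancel₀ _ (hrpos t ht).ne'])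
      (hVpos η hη).ne' (hrpos η hη).ne' (one_div_ne_zero hPRs)
      (cross_term_eq_of_quadratic (by positivity) (hR₁pos η).ne' hs (hquad η))
  exact ⟨fun η hη => (key η hη).1, fun η hη => (key η hη).2.1, fun η hη => (key η hη).2.2.1,
    fun η hη => (key η hη).2.2.2⟩
end

section
/- Let T, Ĉ be real numbers with T > 1, 0 < Ĉ < 1 and TĈ < 1. For real parameters T and Ĉ, define L₉(θ) = TĈ − Ĉ + (1 − TĈ)·cos²θ and R₂(θ) = cos θ + √(L₉(θ)). Let J ⊆ (0,∞) be an open interval and let θ : J → (0, π) be a differentiable function satisfying f·θ'(f) = (1/Ĉ)·R₂(θ(f))·sin(θ(f)) for all f ∈ J, and suppose R₂(θ(f)) ≠ 0 for all f ∈ J. Then θ is twice differentiable on J and, for all f ∈ J, sin(θ(f))·(θ''(f) + 2T·sin²(θ(f))·θ'(f)/f)/θ'(f)² = √(L₉(θ(f))) − (1 − TĈ)·sin²(θ(f))/√(L₉(θ(f))). -/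
open Real Set Filter Topology

/-!
Writing `g x = R₂ x * sin x / C`, the ODE says `θ' = g(θ)/f`, and differentiating the quotient
gives `f θ'' = θ' (g'(θ) - 1)`. Hence the left-hand side equals
`sin θ (g'(θ) - 1 + 2T sin² θ) / g(θ)`, a function of `θ` alone, and the claim becomes a
trigonometric identity that follows from `(√L₉)² = L₉` and `sin² θ + cos² θ = 1`.
-/

theorem hasDerivAt_deriv_of_mul_deriv_eq_s18 {θ g : ℝ → ℝ} {g' f : ℝ} (hf : f ≠ 0)
    (hθ : DifferentiableAt ℝ θ f) (hode : ∀ᶠ y in 𝓝 f, y * deriv θ y = g (θ y))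
    (hg : HasDerivAt g g' (θ f)) :
    HasDerivAt (deriv θ) (deriv θ f * (g' - 1) / f) f := by
  have hquot : HasDerivAt (fun y => g (θ y) / y) ((g' * deriv θ f * f - g (θ f) * 1) / f ^ 2) f :=
    (hg.comp f hθ.hasDerivAt).div (hasDerivAt_id f) hf
  have heq : deriv θ =ᶠ[𝓝 f] fun y => g (θ y) / y := by
    filter_upwards [hode, eventually_ne_nhds hf] with y hy hy0
    rw [← hy, mul_div_cancel_left₀ _ hy0]
  refine (hquot.congr_of_eventuallyEq heq).congr_deriv ?_
  rw [← hode.self_of_nhds]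
  field_simp

theorem div_sq_eq_of_mul_eq {f p q G g' a : ℝ} (hf : f ≠ 0) (hp : f * p = G)
    (hq : q = p * (g' - 1) / f) : (q + a * p / f) / p ^ 2 = (g' - 1 + a) / G := by
  subst hp hq
  rcases eq_or_ne p 0 with rfl | hp
  · simp
  · field_simp

theorem hasDerivAt_cos_add_sqrt_mul_sin {m k : ℝ} {L R : ℝ → ℝ} (hL : ∀ x, L x = m + k * cos x ^ 2)
    (hR : ∀ x, R x = cos x + √(L x)) {x : ℝ} (hLx : 0 < L x) :
    HasDerivAt (fun y => R y * sin y)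
      (cos x ^ 2 - sin x ^ 2 + √(L x) * cos x - k * sin x ^ 2 * cos x / √(L x)) x := by
  have hL' : HasDerivAt L (-(2 * k * sin x * cos x)) x := by
    rw [funext hL]
    refine (((hasDerivAt_cos x).pow 2).const_mul k |>.const_add m).congr_deriv ?_
    push_cast; ring
  have hR' : HasDerivAt R (-sin x + -(2 * k * sin x * cos x) / (2 * √(L x))) x := by
    rw [funext hR]
    exact (hasDerivAt_cos x).add (hL'.sqrt hLx.ne')
  refine (hR'.mul (hasDerivAt_sin x)).congr_deriv ?_
  rw [hR]
  field_simp
  ring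

theorem sin_mul_div_mul_sin_eq_sqrt_sub {T C x : ℝ} {L R : ℝ → ℝ}
    (hL : ∀ x, L x = T * C - C + (1 - T * C) * cos x ^ 2)
    (hR : ∀ x, R x = cos x + √(L x)) (hC : C ≠ 0) (hLx : 0 < L x) (hs : sin x ≠ 0)
    (hRx : R x ≠ 0) :
    sin x * (1 / C * (cos x ^ 2 - sin x ^ 2 + √(L x) * cos x
        - (1 - T * C) * sin x ^ 2 * cos x / √(L x)) - 1 + 2 * T * sin x ^ 2)
      / (1 / C * (R x * sin x))
      = √(L x) - (1 - T * C) * sin x ^ 2 / √(L x) := by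
  have hsq : √(L x) ^ 2 = T * C - C + (1 - T * C) * cos x ^ 2 := by
    rw [sq_sqrt hLx.le, hL]
  have hsqrt : √(L x) ≠ 0 := (sqrt_pos.mpr hLx).ne'
  rw [hR] at hRx ⊢
  field_simp
  linear_combination (-√(L x)) * hsq + (C * T * √(L x)) * sin_sq_add_cos_sq x

theorem stmt_18_general
    (T C : ℝ) (hT : 1 < T) (hC0 : 0 < C) (hTC : T * C < 1)
    (L₉ R₂ : ℝ → ℝ)
    (hL₉ : ∀ x : ℝ, L₉ x = T * C - C + (1 - T * C) * (Real.cos x) ^ 2)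
    (hR₂ : ∀ x : ℝ, R₂ x = Real.cos x + Real.sqrt (L₉ x))
    (a b : ℝ) (J : Set ℝ) (hJ : J = Ioo a b) (hJsub : J ⊆ Ioi (0:ℝ))
    (θ : ℝ → ℝ)
    (hθmem : ∀ f ∈ J, θ f ∈ Ioo (0:ℝ) π)
    (hθdiff : ∀ f ∈ J, DifferentiableAt ℝ θ f)
    (hθode : ∀ f ∈ J, f * deriv θ f = (1 / C) * R₂ (θ f) * Real.sin (θ f))
    (hR₂ne : ∀ f ∈ J, R₂ (θ f) ≠ 0) :
    (∀ f ∈ J, DifferentiableAt ℝ (deriv θ) f) ∧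
    (∀ f ∈ J,
      Real.sin (θ f)
          * (deriv (deriv θ) f
              + 2 * T * (Real.sin (θ f)) ^ 2 * deriv θ f / f)
          / (deriv θ f) ^ 2
        = Real.sqrt (L₉ (θ f))
            - (1 - T * C) * (Real.sin (θ f)) ^ 2 / Real.sqrt (L₉ (θ f))) := by
  have hL_pos (x : ℝ) : 0 < L₉ x := by
    rw [hL₉]
    nlinarith [mul_pos hC0 (sub_pos.mpr hT), mul_nonneg (sub_pos.mpr hTC).le (sq_nonneg (cos x))]
  have hode (f : ℝ) (hf : f ∈ J) : f * deriv θ f = 1 / C * (R₂ (θ f) * sin (θ f)) := by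
    rw [hθode f hf, mul_assoc]
  have hθ'' (f : ℝ) (hf : f ∈ J) := hasDerivAt_deriv_of_mul_deriv_eq_s18 (hJsub hf).ne' (hθdiff f hf)
    (eventually_of_mem ((hJ ▸ isOpen_Ioo : IsOpen J).mem_nhds hf) hode)
    ((hasDerivAt_cos_add_sqrt_mul_sin hL₉ hR₂ (hL_pos (θ f))).const_mul (1 / C))
  refine ⟨fun f hf => (hθ'' f hf).differentiableAt, fun f hf => ?_⟩
  rw [mul_div_assoc, div_sq_eq_of_mul_eq (hJsub hf).ne' (hode f hf) (hθ'' f hf).deriv,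
    ← mul_div_assoc]
  exact sin_mul_div_mul_sin_eq_sqrt_sub hL₉ hR₂ hC0.ne' (hL_pos (θ f))
    (sin_pos_of_pos_of_lt_pi (hθmem f hf).1 (hθmem f hf).2).ne' (hR₂ne f hf)

/-- The auxiliary identity below Formula (5.42):
`sin θ·(θ'' + 2T sin²θ·θ'/f)/θ'² = √L₉ − (1 − TĈ)·sin²θ/√L₉`. -/
theorem stmt_18
    (T C : ℝ) (hT : 1 < T) (hC0 : 0 < C) (hC1 : C < 1) (hTC : T * C < 1)
    (L₉ R₂ : ℝ → ℝ)
    (hL₉ : ∀ x : ℝ, L₉ x = T * C - C + (1 - T * C) * (Real.cos x) ^ 2)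
    (hR₂ : ∀ x : ℝ, R₂ x = Real.cos x + Real.sqrt (L₉ x))
    (a b : ℝ) (J : Set ℝ) (hJ : J = Ioo a b) (hJsub : J ⊆ Ioi (0:ℝ))
    (θ : ℝ → ℝ)
    (hθmem : ∀ f ∈ J, θ f ∈ Ioo (0:ℝ) π)
    (hθdiff : ∀ f ∈ J, DifferentiableAt ℝ θ f)
    (hθode : ∀ f ∈ J, f * deriv θ f = (1 / C) * R₂ (θ f) * Real.sin (θ f))
    (hR₂ne : ∀ f ∈ J, R₂ (θ f) ≠ 0) :
    (∀ f ∈ J, DifferentiableAt ℝ (deriv θ) f) ∧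
    (∀ f ∈ J,
      Real.sin (θ f)
          * (deriv (deriv θ) f
              + 2 * T * (Real.sin (θ f)) ^ 2 * deriv θ f / f)
          / (deriv θ f) ^ 2
        = Real.sqrt (L₉ (θ f))
            - (1 - T * C) * (Real.sin (θ f)) ^ 2 / Real.sqrt (L₉ (θ f))) :=
  stmt_18_general T C hT hC0 hTC L₉ R₂ hL₉ hR₂ a b J hJ hJsub θ hθmem hθdiff hθode hR₂ne
end
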